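/- Let 0 ≤ ε ≤ 1/2, let f : {0,1}^n → {0,1} be boolean, let X be uniform on {0,1}^n and Y = X ⊕ Z where Z has i.i.d. Bernoulli(ε) coordinates independent of X. Let T be a random subset of {1,…,n} obtained by including each i independently with probability (1−2ε)². Then I(f(X);Y) ≤ E_T I(f(X); {X_i}_{i∈T}). Here I(f(X);Y) = H₂(E_x f) − E_y H₂((T_ε f)(y)), and I(f(X); {X_i}_{i∈T}) = H₂(E_x f) − E H₂(E(f|T)), the last expectation being over the values of the coordinates in T; equivalently I(f(X);{X_i}_{i∈T}) = Ent(f|T) + Ent((1−f)|T). -/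

import Mathlib

open Finset

/-- The boolean cube `{0,1}^n`. -/
abbrev Cube (n : ℕ) := Fin n → Bool

/-- Expectation over a uniform point of the cube. -/
noncomputable def EX {n : ℕ} (f : Cube n → ℝ) : ℝ :=
  (∑ x : Cube n, f x) / (2 ^ n : ℝ)

/-- The entropy functional `Ent(f) = E f log₂ f - (E f) log₂ (E f)`. -/
noncomputable def Ent {n : ℕ} (f : Cube n → ℝ) : ℝ :=
  EX (fun x => f x * Real.logb 2 (f x)) - EX f * Real.logb 2 (EX f)

/-- The noise operator `T_ε`. -/
noncomputable def noiseOp {n : ℕ} (ε : ℝ) (f : Cube n → ℝ) : Cube n → ℝ :=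
  fun x => ∑ y : Cube n, ε ^ (hammingDist y x) * (1 - ε) ^ (n - hammingDist y x) * f y

/-- Binary entropy function (base 2). -/
noncomputable def H2 (x : ℝ) : ℝ :=
  -(x * Real.logb 2 x) - (1 - x) * Real.logb 2 (1 - x)

/-- The inverse of the binary entropy function, `H₂⁻¹ : [0,1] → [0,1/2]`. -/
noncomputable def H2inv (y : ℝ) : ℝ :=
  Function.invFunOn H2 (Set.Icc 0 (1 / 2)) y

/-- Mrs. Gerber's function `φ(x, ε)`. -/
noncomputable def phi (x ε : ℝ) : ℝ :=
  1 - H2 ((1 - 2 * ε) * H2inv (1 - x) + ε)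

/-- Conditional expectation of `f` given the coordinates in `A`,
viewed as a function on the cube depending only on coordinates in `A`. -/
noncomputable def condE {n : ℕ} (f : Cube n → ℝ) (A : Finset (Fin n)) : Cube n → ℝ :=
  fun x => (∑ z : Cube n, f (fun i => if i ∈ A then x i else z i)) / (2 ^ n : ℝ)

/-- `Ent(f | A) = Ent(E(f | A))`. -/
noncomputable def EntC {n : ℕ} (f : Cube n → ℝ) (A : Finset (Fin n)) : ℝ :=
  Ent (condE f A)

/-- Expectation over a random subset `T ⊆ [n]` obtained by including each element
independently with probability `l`. -/
noncomputable def ETsub {n : ℕ} (l : ℝ) (g : Finset (Fin n) → ℝ) : ℝ :=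
  ∑ T : Finset (Fin n), l ^ T.card * (1 - l) ^ (n - T.card) * g T


/-- Marginal of a distribution `p` on the cube on the coordinates in `T`
(as a function on the cube, depending only on the coordinates in `T`). -/
noncomputable def marg {n : ℕ} (p : Cube n → ℝ) (T : Finset (Fin n)) (x : Cube n) : ℝ :=
  ∑ y : Cube n, if ∀ i ∈ T, y i = x i then p y else 0

/-- Shannon entropy (base 2) of the marginal of `p` on the coordinates in `T`:
the sum goes over canonical representatives (coordinates outside `T` set to `false`). -/
noncomputable def margEnt {n : ℕ} (p : Cube n → ℝ) (T : Finset (Fin n)) : ℝ :=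
  -∑ x : Cube n,
      if ∀ i ∉ T, x i = false then marg p T x * Real.logb 2 (marg p T x) else 0

/-- Shannon entropy (base 2) of a probability distribution on the cube. -/
noncomputable def shEnt {n : ℕ} (p : Cube n → ℝ) : ℝ :=
  -∑ y : Cube n, p y * Real.logb 2 (p y)

/-- Walsh function `W_S(x) = (-1)^{∑_{i ∈ S} x_i}`. -/
def walsh {n : ℕ} (S : Finset (Fin n)) (x : Cube n) : ℝ :=
  ∏ i ∈ S, (if x i then (-1 : ℝ) else 1)

/-- Walsh–Fourier coefficient `f̂(S) = E_x f(x) W_S(x)`. -/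
noncomputable def fourierCoef {n : ℕ} (f : Cube n → ℝ) (S : Finset (Fin n)) : ℝ :=
  EX (fun x => f x * walsh S x)

/-- The noise operator `T_{ε,R}` acting only in the directions in `R`
(the composition of the directional noise operators `T_{ε,i}`, `i ∈ R`). -/
noncomputable def noiseOpOn {n : ℕ} (ε : ℝ) (R : Finset (Fin n)) (g : Cube n → ℝ) :
    Cube n → ℝ :=
  fun x => ∑ y : Cube n,
    (if ∀ i ∉ R, y i = x i then ∏ i ∈ R, (if y i = x i then 1 - ε else ε) else 0) * g y

/-- `I_g(A,m) = Ent(g | A ∪ {m}) - Ent(g | A) - Ent(g | {m})`. -/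
noncomputable def Ifun {n : ℕ} (g : Cube n → ℝ) (A : Finset (Fin n)) (m : Fin n) : ℝ :=
  EntC g (insert m A) - EntC g A - EntC g {m}

/-- `Z_{S;i,j}(f) = Ent(f|S∪{i,j}) - Ent(f|S∪{i}) - Ent(f|S∪{j}) + Ent(f|S)`. -/
noncomputable def Zfun {n : ℕ} (f : Cube n → ℝ) (S : Finset (Fin n)) (i j : Fin n) : ℝ :=
  EntC f (insert i (insert j S)) - EntC f (insert i S) - EntC f (insert j S) + EntC f S

/-- `Y(A,m,s)`: the average of `Z_{S;i,m}(f)` over subsets `S ⊆ A` with `|S| = s - 1`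
and over `i ∈ A \ S`. -/
noncomputable def Yavg {n : ℕ} (f : Cube n → ℝ) (A : Finset (Fin n)) (m : Fin n) (s : ℕ) : ℝ :=
  (∑ S ∈ A.powerset.filter (fun S => S.card = s - 1), ∑ i ∈ A \ S, Zfun f S i m) /
    (∑ S ∈ A.powerset.filter (fun S => S.card = s - 1), ((A \ S).card : ℝ))

/-- `Λ(k,s,λ) = 1 - ∑_{j=0}^{s-1} C(k,j) λ^j (1-λ)^{k-j}`. -/
noncomputable def Lam (k s : ℕ) (l : ℝ) : ℝ :=
  1 - ∑ j ∈ Finset.range s, (Nat.choose k j : ℝ) * l ^ j * (1 - l) ^ (k - j)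

/-- `t_s`: the average of `Z_{S;i,j}(f)` over subsets `S ⊆ [n]` with `|S| = s - 1`
and over distinct `i, j ∉ S`. -/
noncomputable def tAvg {n : ℕ} (f : Cube n → ℝ) (s : ℕ) : ℝ :=
  (∑ S ∈ (Finset.univ : Finset (Finset (Fin n))).filter (fun S => S.card = s - 1),
      ∑ i ∈ Sᶜ, ∑ j ∈ Sᶜ \ {i}, Zfun f S i j) /
    (∑ S ∈ (Finset.univ : Finset (Finset (Fin n))).filter (fun S => S.card = s - 1),
      ∑ i ∈ Sᶜ, ((Sᶜ \ {i}).card : ℝ))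

/-- The entropy functional on an arbitrary finite set with uniform measure. -/
noncomputable def entFin {α : Type*} [Fintype α] (g : α → ℝ) : ℝ :=
  (∑ a, g a * Real.logb 2 (g a)) / (Fintype.card α : ℝ) -
    ((∑ a, g a) / (Fintype.card α : ℝ)) * Real.logb 2 ((∑ a, g a) / (Fintype.card α : ℝ))

/-!
The case `n = 1` is a two-point inequality for `H₂`: with `m = (a + b) / 2`,
`u = (b - a) / 2` and `ρ = 1 - 2ε`, both sides are governed by
`(m + u) log (m + u) + (m - u) log (m - u) - 2 m log m`, a power series in `u²` with nonnegative
coefficients, which therefore shrinks at least by the factor `ρ²` when `u` is replaced by `ρ u`.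
Splitting off the first coordinate, the noisy side becomes the two-point mixture of the noisy
restrictions `f₀, f₁`, while a random set `T` contains the coordinate with probability `ρ²`
(and then sees `f₀` and `f₁` separately) or misses it (and then sees their average); so the
inequality `E_T E H₂(E(f|T)) ≤ E H₂(T_ε f)` for functions with values in `[0, 1]` tensorizes.
-/

section TwoPoint

open Real

noncomputable def mulLogGap (m u : ℝ) : ℝ :=
  (m + u) * log (m + u) + (m - u) * log (m - u) - 2 * m * log m

lemma hasSum_mulLogGap {m u : ℝ} (hu : |u| < m) :
    HasSum (fun j : ℕ => 2 * m * (u / m) ^ (2 * j + 2) / ((2 * j + 1) * (2 * j + 2)))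
      (mulLogGap m u) := by
  have hm : 0 < m := (abs_nonneg u).trans_lt hu
  obtain ⟨v, rfl⟩ : ∃ v, u = m * v := ⟨u / m, by field_simp⟩
  have hv1 : |v| < 1 := by rwa [abs_mul, abs_of_pos hm, mul_lt_iff_lt_one_right hm] at hu
  have hv2 : |v ^ 2| < 1 := by rw [abs_pow]; exact pow_lt_one₀ (abs_nonneg v) hv1 two_ne_zero
  obtain ⟨hv0, hv1'⟩ := abs_lt.mp hv1
  have hsum := ((hasSum_log_sub_log_of_abs_lt_one hv1).mul_left (m * v)).sub
    ((hasSum_pow_div_log_of_abs_lt_one hv2).mul_left m)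
  have hterm : ∀ j : ℕ, m * v * (2 * (1 / (2 * j + 1)) * v ^ (2 * j + 1))
      - m * ((v ^ 2) ^ (j + 1) / (j + 1))
      = 2 * m * (m * v / m) ^ (2 * j + 2) / ((2 * j + 1) * (2 * j + 2)) := fun j => by
    field_simp
    ring
  have hval : m * v * (log (1 + v) - log (1 - v)) - m * -log (1 - v ^ 2) = mulLogGap m (m * v) := by
    rw [mulLogGap, show 1 - v ^ 2 = (1 + v) * (1 - v) by ring,
      show m + m * v = m * (1 + v) by ring, show m - m * v = m * (1 - v) by ring,
      log_mul (by linarith) (by linarith), log_mul hm.ne' (by linarith),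
      log_mul hm.ne' (by linarith)]
    ring
  simpa only [hterm, hval] using hsum

lemma mulLogGap_mul_le {m u ρ : ℝ} (hu : |u| < m) (hρ : |ρ| ≤ 1) :
    mulLogGap m (ρ * u) ≤ ρ ^ 2 * mulLogGap m u := by
  have hm : 0 < m := (abs_nonneg u).trans_lt hu
  have hρu : |ρ * u| < m := by
    rw [abs_mul]; exact (mul_le_of_le_one_left (abs_nonneg u) hρ).trans_lt hu
  refine hasSum_le (fun j => ?_) (hasSum_mulLogGap hρu) ((hasSum_mulLogGap hu).mul_left _)
  have hpow : ρ ^ (2 * j + 2) ≤ ρ ^ 2 := by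
    rw [pow_add, pow_mul]
    exact mul_le_of_le_one_left (sq_nonneg ρ)
      (pow_le_one₀ (sq_nonneg ρ) ((sq_le_one_iff_abs_le_one ρ).mpr hρ))
  have hterm : 2 * m * (ρ * u / m) ^ (2 * j + 2) / ((2 * j + 1) * (2 * j + 2))
      = ρ ^ (2 * j + 2) * (2 * m * (u / m) ^ (2 * j + 2) / ((2 * j + 1) * (2 * j + 2))) := by
    rw [mul_div_assoc ρ, mul_pow]; ring
  rw [hterm]
  have heven : Even (2 * j + 2) := ⟨j + 1, by ring⟩
  exact mul_le_mul_of_nonneg_right hpow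
    (div_nonneg (mul_nonneg (by linarith) (heven.pow_nonneg _)) (by positivity))

lemma H2_eq_binEntropy_div (x : ℝ) : H2 x = binEntropy x / log 2 := by
  simp only [H2, binEntropy, logb, log_inv]
  ring

@[fun_prop]
lemma continuous_H2 : Continuous H2 := by
  simp only [funext H2_eq_binEntropy_div]
  fun_prop

lemma H2_sub_add_H2_add (m w : ℝ) :
    H2 (m - w) + H2 (m + w) = 2 * H2 m - (mulLogGap m w + mulLogGap (1 - m) w) / log 2 := by
  simp only [H2, logb, mulLogGap]
  rw [show (1 : ℝ) - (m - w) = 1 - m + w by ring, show (1 : ℝ) - (m + w) = 1 - m - w by ring]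
  ring

lemma H2_mix_le {m u ρ : ℝ} (hu : |u| < m) (hu' : |u| < 1 - m) (hρ : |ρ| ≤ 1) :
    ρ ^ 2 * ((H2 (m - u) + H2 (m + u)) / 2) + (1 - ρ ^ 2) * H2 m
      ≤ (H2 (m - ρ * u) + H2 (m + ρ * u)) / 2 := by
  have hgap : (mulLogGap m (ρ * u) + mulLogGap (1 - m) (ρ * u)) / log 2
      ≤ ρ ^ 2 * ((mulLogGap m u + mulLogGap (1 - m) u) / log 2) := by
    rw [← mul_div_assoc, mul_add]
    exact div_le_div_of_nonneg_right
      (add_le_add (mulLogGap_mul_le hu hρ) (mulLogGap_mul_le hu' hρ)) (log_nonneg one_le_two)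
  rw [H2_sub_add_H2_add, H2_sub_add_H2_add]
  linarith

lemma H2_two_point_of_mem_Ioo {ε a b : ℝ} (hε0 : 0 ≤ ε) (hε1 : ε ≤ 1)
    (ha : a ∈ Set.Ioo 0 1) (hb : b ∈ Set.Ioo 0 1) :
    (1 - 2 * ε) ^ 2 * ((H2 a + H2 b) / 2) + (1 - (1 - 2 * ε) ^ 2) * H2 ((a + b) / 2)
      ≤ (H2 ((1 - ε) * a + ε * b) + H2 (ε * a + (1 - ε) * b)) / 2 := by
  obtain ⟨ha0, ha1⟩ := ha
  obtain ⟨hb0, hb1⟩ := hb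
  have hρ : |1 - 2 * ε| ≤ 1 := abs_le.mpr ⟨by linarith, by linarith⟩
  have hu : |(b - a) / 2| < (a + b) / 2 := abs_lt.mpr ⟨by linarith, by linarith⟩
  have hu' : |(b - a) / 2| < 1 - (a + b) / 2 := abs_lt.mpr ⟨by linarith, by linarith⟩
  convert H2_mix_le hu hu' hρ using 4 <;> ring_nf

lemma H2_two_point {ε a b : ℝ} (hε0 : 0 ≤ ε) (hε1 : ε ≤ 1)
    (ha : a ∈ Set.Icc 0 1) (hb : b ∈ Set.Icc 0 1) :
    (1 - 2 * ε) ^ 2 * ((H2 a + H2 b) / 2) + (1 - (1 - 2 * ε) ^ 2) * H2 ((a + b) / 2)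
      ≤ (H2 ((1 - ε) * a + ε * b) + H2 (ε * a + (1 - ε) * b)) / 2 := by
  let S : Set (ℝ × ℝ) := {p | (1 - 2 * ε) ^ 2 * ((H2 p.1 + H2 p.2) / 2)
      + (1 - (1 - 2 * ε) ^ 2) * H2 ((p.1 + p.2) / 2)
    ≤ (H2 ((1 - ε) * p.1 + ε * p.2) + H2 (ε * p.1 + (1 - ε) * p.2)) / 2}
  have hS : IsClosed S := isClosed_le (by fun_prop) (by fun_prop)
  have hsub : Set.Ioo 0 1 ×ˢ Set.Ioo 0 1 ⊆ S := fun p hp =>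
    H2_two_point_of_mem_Ioo hε0 hε1 hp.1 hp.2
  have := closure_minimal hsub hS
  rw [closure_prod_eq, closure_Ioo zero_ne_one] at this
  exact this (Set.mk_mem_prod ha hb)

end TwoPoint

lemma sum_cube_succ {M : Type*} [AddCommMonoid M] {n : ℕ} (F : Cube (n + 1) → M) :
    ∑ x, F x = ∑ x : Cube n, (F (Fin.cons false x) + F (Fin.cons true x)) := by
  rw [← (Fin.consEquiv fun _ => Bool).sum_comp, Fintype.sum_prod_type, Fintype.sum_bool,
    ← sum_add_distrib]
  simp [Fin.consEquiv, add_comm]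

lemma EX_succ {n : ℕ} (F : Cube (n + 1) → ℝ) :
    EX F = (EX (fun x => F (Fin.cons false x)) + EX (fun x => F (Fin.cons true x))) / 2 := by
  simp only [EX, sum_cube_succ F, sum_add_distrib, pow_succ]
  field_simp

lemma EX_add {n : ℕ} (F G : Cube n → ℝ) : EX (fun x => F x + G x) = EX F + EX G := by
  simp only [EX, sum_add_distrib, add_div]

lemma EX_const_mul {n : ℕ} (c : ℝ) (F : Cube n → ℝ) : EX (fun x => c * F x) = c * EX F := by
  simp only [EX, ← mul_sum, mul_div_assoc]

lemma EX_div_const {n : ℕ} (F : Cube n → ℝ) (c : ℝ) : EX (fun x => F x / c) = EX F / c := by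
  simp only [EX, ← sum_div, div_right_comm]

lemma EX_mono {n : ℕ} {F G : Cube n → ℝ} (h : ∀ x, F x ≤ G x) : EX F ≤ EX G := by
  unfold EX; gcongr with x; exact h x

lemma hammingDist_cons {n : ℕ} (a b : Bool) (x y : Cube n) :
    hammingDist (Fin.cons a x : Cube (n + 1)) (Fin.cons b y)
      = (if a = b then 0 else 1) + hammingDist x y := by
  simp only [hammingDist, card_filter, Fin.sum_univ_succ, Fin.cons_zero, Fin.cons_succ]
  split_ifs <;> simp_all

lemma noiseOp_cons {n : ℕ} (ε : ℝ) (f : Cube (n + 1) → ℝ) (a : Bool) (y : Cube n) :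
    noiseOp ε f (Fin.cons a y)
      = (1 - ε) * noiseOp ε (fun x => f (Fin.cons a x)) y
        + ε * noiseOp ε (fun x => f (Fin.cons (!a) x)) y := by
  have hle : ∀ x : Cube n, hammingDist x y ≤ n := fun x => by
    simpa using hammingDist_le_card_fintype (x := x) (y := y)
  simp only [noiseOp, sum_cube_succ, hammingDist_cons, mul_sum, ← sum_add_distrib]
  refine sum_congr rfl fun x _ => ?_
  have h1 : n + 1 - hammingDist x y = n - hammingDist x y + 1 := by grind [hle x]
  have h2 : n + 1 - (1 + hammingDist x y) = n - hammingDist x y := by omega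
  cases a <;> simp only [Bool.not_false, Bool.not_true, if_pos, if_neg, zero_add, h1, h2,
    reduceCtorEq, not_false_eq_true, pow_succ, pow_add] <;> ring

lemma noiseOp_const {n : ℕ} (ε c : ℝ) (y : Cube n) : noiseOp ε (fun _ => c) y = c := by
  induction n with
  | zero => simp [noiseOp, Unique.eq_default y]
  | succ n ih =>
    rw [← Fin.cons_self_tail y, noiseOp_cons, ih]
    ring

lemma noiseOp_mono {n : ℕ} {ε : ℝ} (hε0 : 0 ≤ ε) (hε1 : ε ≤ 1) {f g : Cube n → ℝ}
    (hfg : ∀ x, f x ≤ g x) (y : Cube n) : noiseOp ε f y ≤ noiseOp ε g y := by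
  have : 0 ≤ 1 - ε := by linarith
  unfold noiseOp; gcongr with x; exact hfg x

lemma noiseOp_avg {n : ℕ} (ε : ℝ) (f g : Cube n → ℝ) (y : Cube n) :
    noiseOp ε (fun x => (f x + g x) / 2) y = (noiseOp ε f y + noiseOp ε g y) / 2 := by
  simp only [noiseOp, mul_div_assoc', mul_add, sum_div, add_div, sum_add_distrib]

lemma noiseOp_mem_Icc {n : ℕ} {ε : ℝ} (hε0 : 0 ≤ ε) (hε1 : ε ≤ 1) {f : Cube n → ℝ}
    (hf : ∀ x, f x ∈ Set.Icc 0 1) (y : Cube n) : noiseOp ε f y ∈ Set.Icc 0 1 := by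
  constructor
  · simpa [noiseOp_const] using noiseOp_mono hε0 hε1 (fun x => (hf x).1) y
  · simpa [noiseOp_const] using noiseOp_mono hε0 hε1 (fun x => (hf x).2) y

lemma condE_insert_zero_cons {n : ℕ} (f : Cube (n + 1) → ℝ) (T : Finset (Fin n)) (a : Bool)
    (x : Cube n) :
    condE f (insert 0 (T.image Fin.succ)) (Fin.cons a x)
      = condE (fun z => f (Fin.cons a z)) T x := by
  have blend : ∀ c (z : Cube n),
      (fun i => if i ∈ insert 0 (T.image Fin.succ) then (Fin.cons a x : Cube (n + 1)) i
        else Fin.cons c z i) = Fin.cons a (fun j => if j ∈ T then x j else z j) := by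
    intro c z; funext i; cases i using Fin.cases <;> simp
  simp only [condE, sum_cube_succ, blend, ← two_mul, ← mul_sum, pow_succ]
  field_simp

lemma condE_image_succ_cons {n : ℕ} (f : Cube (n + 1) → ℝ) (T : Finset (Fin n)) (a : Bool)
    (x : Cube n) :
    condE f (T.image Fin.succ) (Fin.cons a x)
      = condE (fun z => (f (Fin.cons false z) + f (Fin.cons true z)) / 2) T x := by
  have blend : ∀ c (z : Cube n),
      (fun i => if i ∈ T.image Fin.succ then (Fin.cons a x : Cube (n + 1)) i
        else Fin.cons c z i) = Fin.cons c (fun j => if j ∈ T then x j else z j) := by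
    intro c z; funext i; cases i using Fin.cases <;> simp
  simp only [condE, sum_cube_succ, blend, pow_succ, ← sum_div]
  field_simp

lemma sum_finset_fin_succ {M : Type*} [AddCommMonoid M] {n : ℕ} (G : Finset (Fin (n + 1)) → M) :
    ∑ T, G T
      = ∑ T : Finset (Fin n), (G (T.image Fin.succ) + G (insert 0 (T.image Fin.succ))) := by
  have h0 : (0 : Fin (n + 1)) ∉ univ.image Fin.succ := by simp
  have hinj : ∀ s : Finset (Fin n), Set.InjOn (fun T : Finset (Fin n) => T.image Fin.succ)
      s.powerset :=
    fun s => image_injOn_powerset_of_injOn (Fin.succ_injective n).injOn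
  rw [← powerset_univ, Fin.univ_succ, cons_eq_insert, map_eq_image]
  change ∑ T ∈ (insert 0 (univ.image Fin.succ)).powerset, G T = _
  rw [sum_powerset_insert h0, powerset_image, sum_image (hinj _), sum_image (hinj _),
    powerset_univ, sum_add_distrib]

lemma ETsub_succ {n : ℕ} (l : ℝ) (G : Finset (Fin (n + 1)) → ℝ) :
    ETsub l G = (1 - l) * ETsub l (fun T => G (T.image Fin.succ))
      + l * ETsub l (fun T => G (insert 0 (T.image Fin.succ))) := by
  have h0 : ∀ T : Finset (Fin n), (0 : Fin (n + 1)) ∉ T.image Fin.succ := by simp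
  have hcard : ∀ T : Finset (Fin n), T.card ≤ n := fun T => by
    simpa using card_le_univ T
  unfold ETsub
  rw [sum_finset_fin_succ, mul_sum, mul_sum, ← sum_add_distrib]
  refine sum_congr rfl fun T _ => ?_
  rw [card_insert_of_notMem (h0 T), card_image_of_injective _ (Fin.succ_injective n),
    show n + 1 - T.card = n - T.card + 1 by grind [hcard T], Nat.add_sub_add_right]
  ring

lemma ETsub_const {n : ℕ} (l c : ℝ) : ETsub (n := n) l (fun _ => c) = c := by
  simp [ETsub, ← sum_mul, Fin.sum_pow_mul_eq_add_pow]

lemma ETsub_add {n : ℕ} (l : ℝ) (F G : Finset (Fin n) → ℝ) :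
    ETsub l (fun T => F T + G T) = ETsub l F + ETsub l G := by
  simp only [ETsub, mul_add, sum_add_distrib]

lemma ETsub_sub {n : ℕ} (l : ℝ) (F G : Finset (Fin n) → ℝ) :
    ETsub l (fun T => F T - G T) = ETsub l F - ETsub l G := by
  simp only [ETsub, mul_sub, sum_sub_distrib]

lemma ETsub_div_const {n : ℕ} (l : ℝ) (F : Finset (Fin n) → ℝ) (c : ℝ) :
    ETsub l (fun T => F T / c) = ETsub l F / c := by
  simp only [ETsub, mul_div_assoc', sum_div]

lemma EX_comp_condE_image_succ {n : ℕ} (Φ : ℝ → ℝ) (f : Cube (n + 1) → ℝ)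
    (T : Finset (Fin n)) :
    EX (fun x => Φ (condE f (T.image Fin.succ) x))
      = EX (fun x =>
          Φ (condE (fun z => (f (Fin.cons false z) + f (Fin.cons true z)) / 2) T x)) := by
  simp only [EX_succ (fun x => Φ (condE f (T.image Fin.succ) x)), condE_image_succ_cons]
  ring

lemma EX_comp_condE_insert_zero {n : ℕ} (Φ : ℝ → ℝ) (f : Cube (n + 1) → ℝ)
    (T : Finset (Fin n)) :
    EX (fun x => Φ (condE f (insert 0 (T.image Fin.succ)) x))
      = (EX (fun x => Φ (condE (fun z => f (Fin.cons false z)) T x))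
        + EX (fun x => Φ (condE (fun z => f (Fin.cons true z)) T x))) / 2 := by
  simp only [EX_succ (fun x => Φ (condE f (insert 0 (T.image Fin.succ)) x)),
    condE_insert_zero_cons]

lemma EX_comp_noiseOp_succ {n : ℕ} (Φ : ℝ → ℝ) (ε : ℝ) (f : Cube (n + 1) → ℝ) :
    EX (fun y => Φ (noiseOp ε f y))
      = EX (fun y => (Φ ((1 - ε) * noiseOp ε (fun x => f (Fin.cons false x)) y
            + ε * noiseOp ε (fun x => f (Fin.cons true x)) y)
          + Φ (ε * noiseOp ε (fun x => f (Fin.cons false x)) y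
            + (1 - ε) * noiseOp ε (fun x => f (Fin.cons true x)) y)) / 2) := by
  simp only [EX_succ (fun y => Φ (noiseOp ε f y)), noiseOp_cons, Bool.not_false, Bool.not_true,
    EX_div_const, EX_add, add_comm (ε * _)]

theorem ETsub_EX_H2_condE_le_EX_H2_noiseOp {n : ℕ} {ε : ℝ} (hε0 : 0 ≤ ε) (hε1 : ε ≤ 1)
    {f : Cube n → ℝ} (hf : ∀ x, f x ∈ Set.Icc 0 1) :
    ETsub ((1 - 2 * ε) ^ 2) (fun T => EX (fun x => H2 (condE f T x)))
      ≤ EX (fun y => H2 (noiseOp ε f y)) := by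
  induction n with
  | zero =>
    simp [ETsub, EX, condE, noiseOp, eq_empty_of_isEmpty (default : Finset (Fin 0))]
  | succ n ih =>
    set l := (1 - 2 * ε) ^ 2
    have hl0 : 0 ≤ l := sq_nonneg _
    have hl1 : 0 ≤ 1 - l := by nlinarith
    set f₀ : Cube n → ℝ := fun z => f (Fin.cons false z)
    set f₁ : Cube n → ℝ := fun z => f (Fin.cons true z)
    have hf₀ : ∀ x, f₀ x ∈ Set.Icc 0 1 := fun x => hf _
    have hf₁ : ∀ x, f₁ x ∈ Set.Icc 0 1 := fun x => hf _
    have hfm : ∀ x, (f₀ x + f₁ x) / 2 ∈ Set.Icc 0 1 := fun x =>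
      ⟨by linarith [(hf₀ x).1, (hf₁ x).1], by linarith [(hf₀ x).2, (hf₁ x).2]⟩
    calc ETsub l (fun T => EX (fun x => H2 (condE f T x)))
        = (1 - l) * ETsub l (fun T => EX (fun x => H2 (condE (fun z => (f₀ z + f₁ z) / 2) T x)))
          + l * ((ETsub l (fun T => EX (fun x => H2 (condE f₀ T x)))
            + ETsub l (fun T => EX (fun x => H2 (condE f₁ T x)))) / 2) := by
          simp only [ETsub_succ, EX_comp_condE_image_succ, EX_comp_condE_insert_zero,
            ETsub_div_const, ETsub_add, f₀, f₁]
      _ ≤ (1 - l) * EX (fun y => H2 (noiseOp ε (fun z => (f₀ z + f₁ z) / 2) y))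
          + l * ((EX (fun y => H2 (noiseOp ε f₀ y))
            + EX (fun y => H2 (noiseOp ε f₁ y))) / 2) := by
          gcongr
          exacts [ih hfm, ih hf₀, ih hf₁]
      _ = EX (fun y => (1 - l) * H2 (noiseOp ε (fun z => (f₀ z + f₁ z) / 2) y)
          + l * ((H2 (noiseOp ε f₀ y) + H2 (noiseOp ε f₁ y)) / 2)) := by
          simp only [EX_add, EX_const_mul, EX_div_const]
      _ ≤ EX (fun y => (H2 ((1 - ε) * noiseOp ε f₀ y + ε * noiseOp ε f₁ y)
          + H2 (ε * noiseOp ε f₀ y + (1 - ε) * noiseOp ε f₁ y)) / 2) := EX_mono fun y => by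
          rw [noiseOp_avg]
          linarith [H2_two_point hε0 hε1 (noiseOp_mem_Icc hε0 hε1 hf₀ y)
            (noiseOp_mem_Icc hε0 hε1 hf₁ y)]
      _ = EX (fun y => H2 (noiseOp ε f y)) := (EX_comp_noiseOp_succ H2 ε f).symm

/-- for boolean `f`, `I(f(X);Y) ≤ E_T I(f(X); {X_i}_{i∈T})`, where
`I(f(X);Y) = H₂(E_x f) - E_y H₂((T_ε f)(y))` and
`I(f(X);{X_i}_{i∈T}) = H₂(E_x f) - E H₂(E(f|T))`. -/
theorem stmt6 {n : ℕ} (ε : ℝ) (hε0 : 0 ≤ ε) (hε1 : ε ≤ 1 / 2)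
    (f : Cube n → ℝ) (hf : ∀ x, f x = 0 ∨ f x = 1) :
    H2 (EX f) - EX (fun y => H2 (noiseOp ε f y)) ≤
      ETsub ((1 - 2 * ε) ^ 2) (fun T => H2 (EX f) - EX (fun x => H2 (condE f T x))) := by
  have hf' : ∀ x, f x ∈ Set.Icc 0 1 := fun x => by rcases hf x with h | h <;> simp [h]
  rw [ETsub_sub, ETsub_const]
  linarith [ETsub_EX_H2_condE_le_EX_H2_noiseOp hε0 (by linarith) hf']
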